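/- arXiv:1106.5626 — 2 statements merged into one kernel-verified Lean document; each statement's English description precedes it below -/
import Mathlib

section
/- Fix integers m ≥ 1 and ℓ ≥ 1 and nonempty subsets (clusters) C_1, …, C_ℓ of {1,…,m}; for each r let Ω_r := diag(1_{C_r}) − (1/|C_r|) 1_{C_r} 1_{C_r}^T ∈ ℝ^{m×m}. Let M ∈ ℝ^{m×m} be symmetric positive definite, P_r the Moore–Penrose pseudoinverse of Ω_r M Ω_r, F_r := I − P_r M, let ρ_1, …, ρ_ℓ be positive reals with Σ_r ρ_r = 1, and set F_ave := Σ_r ρ_r F_r. Then: (a) every (complex) eigenvalue of F_ave is real and has absolute value at most 1; (b) 1^T F_ave = 1^T; (c) if moreover the sum of the column spaces of Ω_1, …, Ω_ℓ equals ker 1^T, then the eigenspace of F_ave for the eigenvalue 1 is the one-dimensional span of M^{−1} 1, and every eigenvalue λ ≠ 1 of F_ave satisfies |λ| < 1. -/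
/-!
Write `F_r = 1 - P_r M`. Because `Ω_r` is an orthogonal projection, the pseudoinverse satisfies
`P_r Ω_r = Ω_r P_r = P_r`, hence `P_r M P_r = P_r`, and then `M - M P_r M = F_rᵀ M F_r`. Both
`M P_r M` and `M - M P_r M` are positive semidefinite, so averaging gives `0 ≤ M F_ave ≤ M` in
the Loewner order. If `F_ave v = λ v` with `v ≠ 0`, then `v* (M F_ave) v = λ v* M v`, where both
Hermitian forms are real and `0 ≤ v* (M F_ave) v ≤ v* M v` with `v* M v > 0`: so `λ ∈ [0, 1]`.

For (c), a fixed vector `x` kills the semidefinite form `Σ_r ρ_r M P_r M`, so `P_r M x = 0`, i.e.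
`Ω_r M x = 0`, for every `r`. Thus `M x` is orthogonal to every column space of the `Ω_r`, hence
to `ker 1ᵀ`, and is a multiple of `1`. Finally `Ω_r 1 = 0` forces `P_r 1 = 0`, which gives (b)
and `F_ave M⁻¹ 1 = M⁻¹ 1`.
-/

open Matrix

/-- The centering matrix `Ω_C = diag(1_C) − (1/|C|) 1_C 1_Cᵀ` associated with a cluster `C`. -/
noncomputable def Omega {m : ℕ} (C : Finset (Fin m)) : Matrix (Fin m) (Fin m) ℝ :=
  Matrix.diagonal (fun i => if i ∈ C then (1 : ℝ) else 0) -
    (1 / (C.card : ℝ)) • Matrix.vecMulVec (fun i => if i ∈ C then (1 : ℝ) else 0)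
      (fun i => if i ∈ C then (1 : ℝ) else 0)

/-- `P` is the Moore–Penrose pseudoinverse of `B`. -/
def IsMP {m : ℕ} (B P : Matrix (Fin m) (Fin m) ℝ) : Prop :=
  B * P * B = B ∧ P * B * P = P ∧ (B * P)ᵀ = B * P ∧ (P * B)ᵀ = P * B

/-- `lam` is a (complex) eigenvalue of the real matrix `A`. -/
def IsEigenvalue {m : ℕ} (A : Matrix (Fin m) (Fin m) ℝ) (lam : ℂ) : Prop :=
  ∃ v : Fin m → ℂ, v ≠ 0 ∧ (A.map (fun a => (a : ℂ))).mulVec v = lam • v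

namespace Omega

-- No nonemptiness is needed: for `C = ∅` the convention `1 / 0 = 0` makes `Omega ∅ = 0`.
variable {m : ℕ} (C : Finset (Fin m))

theorem isSymm : (Omega C).IsSymm := by
  simp only [Matrix.IsSymm, Omega, transpose_sub, diagonal_transpose, transpose_smul,
    transpose_vecMulVec]

theorem isIdempotentElem : IsIdempotentElem (Omega C) := by
  set d : Fin m → ℝ := fun i => if i ∈ C then 1 else 0
  have hdd : ∀ i, d i * d i = d i := fun i => by by_cases h : i ∈ C <;> simp [d, h]
  have hd_diag : diagonal d *ᵥ d = d := funext fun i => by rw [mulVec_diagonal, hdd]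
  have hdiag_d : d ᵥ* diagonal d = d := funext fun i => by rw [vecMul_diagonal, hdd]
  have hdot : d ⬝ᵥ d = C.card := by simp [dotProduct, hdd, d, Finset.sum_ite_mem]
  have hc : (1 / (C.card : ℝ)) * (1 / C.card) * C.card = 1 / C.card := by
    rcases eq_or_ne (C.card : ℝ) 0 with h | h
    · simp [h]
    · field_simp
  have hΩ : Omega C = diagonal d - (1 / (C.card : ℝ)) • vecMulVec d d := rfl
  rw [IsIdempotentElem, hΩ]
  have hdiag : diagonal d * diagonal d = diagonal d := by
    rw [diagonal_mul_diagonal]; exact congrArg diagonal (funext hdd)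
  rw [sub_mul, mul_sub, mul_sub, smul_mul_assoc, smul_mul_assoc, mul_smul_comm, mul_smul_comm,
    hdiag, mul_vecMulVec, vecMulVec_mul, vecMulVec_mul_vecMulVec, hd_diag, hdiag_d, hdot,
    vecMulVec_smul, smul_smul, smul_smul, hc]
  abel

theorem mulVec_one : Omega C *ᵥ (fun _ => 1) = 0 := by
  set d : Fin m → ℝ := fun i => if i ∈ C then 1 else 0
  have hΩ : Omega C = diagonal d - (1 / (C.card : ℝ)) • vecMulVec d d := rfl
  have hdot : d ⬝ᵥ (fun _ => 1) = C.card := by simp [d, dotProduct, Finset.sum_ite_mem]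
  have hd : diagonal d *ᵥ (fun _ => 1) = d := funext fun i => by rw [mulVec_diagonal, mul_one]
  rw [hΩ, sub_mulVec, smul_mulVec, vecMulVec_mulVec, hd, hdot, op_smul_eq_smul, smul_smul]
  rcases eq_or_ne (C.card : ℝ) 0 with h | h
  · have hd0 : d = 0 := by
      ext i; simp [d, Finset.card_eq_zero.mp (by exact_mod_cast h)]
    simp [hd0]
  · rw [one_div_mul_cancel h, one_smul, sub_self]

end Omega

namespace IsMP

variable {m : ℕ} {B P Q : Matrix (Fin m) (Fin m) ℝ}

theorem transpose (h : IsMP B P) : IsMP Bᵀ Pᵀ := by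
  obtain ⟨h₁, h₂, h₃, h₄⟩ := h
  refine ⟨?_, ?_, ?_, ?_⟩
  · rw [← transpose_mul, ← transpose_mul, ← mul_assoc, h₁]
  · rw [← transpose_mul, ← transpose_mul, ← mul_assoc, h₂]
  · rw [← transpose_mul, h₄, h₄]
  · rw [← transpose_mul, h₃, h₃]

theorem unique (hP : IsMP B P) (hQ : IsMP B Q) : P = Q := by
  obtain ⟨p₁, p₂, p₃, p₄⟩ := hP
  obtain ⟨q₁, q₂, q₃, q₄⟩ := hQ
  have hBP : B * P = B * Q := by
    calc B * P = (B * Q) * (B * P) := by rw [← mul_assoc, q₁]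
    _ = (B * Q)ᵀ * (B * P)ᵀ := by rw [q₃, p₃]
    _ = (B * P * B * Q)ᵀ := by simp only [transpose_mul, mul_assoc]
    _ = B * Q := by rw [p₁, q₃]
  have hPB : P * B = Q * B := by
    calc P * B = (P * B) * (Q * B) := by rw [mul_assoc, ← mul_assoc B, q₁]
    _ = (P * B)ᵀ * (Q * B)ᵀ := by rw [q₄, p₄]
    _ = (Q * (B * P * B))ᵀ := by simp only [transpose_mul, mul_assoc]
    _ = Q * B := by rw [p₁, q₄]
  calc P = P * B * P := p₂.symm
  _ = Q * B * Q := by rw [hPB, mul_assoc, hBP, ← mul_assoc]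
  _ = Q := q₂

variable (hB : B.IsSymm) (h : IsMP B P)
include hB h

theorem isSymm : P.IsSymm :=
  (hB.eq ▸ h.transpose).unique h

theorem mul_comm : B * P = P * B := by
  rw [← h.2.2.2, transpose_mul, hB.eq, (h.isSymm hB).eq]

theorem eq_mul_mul : P = P * P * B := by
  rw [mul_assoc, ← h.mul_comm hB, ← mul_assoc, h.2.1]

theorem mul_eq_self_of_mul_eq_self {X : Matrix (Fin m) (Fin m) ℝ} (hX : B * X = B) :
    P * X = P := by
  rw [h.eq_mul_mul hB, mul_assoc, hX]

theorem mulVec_eq_zero_iff {v : Fin m → ℝ} : P *ᵥ v = 0 ↔ B *ᵥ v = 0 := by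
  constructor <;> intro hv
  · rw [← h.1, mul_assoc, ← h.mul_comm hB, ← mul_assoc, ← mulVec_mulVec, hv, mulVec_zero]
  · rw [h.eq_mul_mul hB, ← mulVec_mulVec, hv, mulVec_zero]

end IsMP

theorem IsMP.posSemidef {m : ℕ} {B P : Matrix (Fin m) (Fin m) ℝ} (hB : B.PosSemidef)
    (h : IsMP B P) : P.PosSemidef := by
  have := hB.conjTranspose_mul_mul_same P
  rwa [conjTranspose_eq_transpose_of_trivial,
    (h.isSymm (isHermitian_iff_isSymm.mp hB.isHermitian)).eq, h.2.1] at this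

theorem Matrix.IsSymm.conj {n α : Type*} [Fintype n] [CommSemiring α] {Ω M : Matrix n n α}
    (hΩ : Ω.IsSymm)
    (hM : M.IsSymm) : (Ω * M * Ω).IsSymm := by
  rw [IsSymm, transpose_mul, transpose_mul, hΩ.eq, hM.eq, mul_assoc]

section CompressedPseudoinverse

variable {m : ℕ} {Ω M P : Matrix (Fin m) (Fin m) ℝ}

theorem pinv_mul_mul_pinv (hΩ : Ω.IsSymm) (hΩΩ : IsIdempotentElem Ω) (hM : M.IsSymm)
    (hP : IsMP (Ω * M * Ω) P) : P * M * P = P := by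
  have hPs := hP.isSymm (hΩ.conj hM)
  have hPΩ : P * Ω = P := hP.mul_eq_self_of_mul_eq_self (hΩ.conj hM) (by rw [mul_assoc, hΩΩ.eq])
  have hΩP : Ω * P = P := by rw [← hΩ.eq, ← hPs.eq, ← transpose_mul, hPΩ]
  calc P * M * P = P * Ω * M * (Ω * P) := by rw [hPΩ, hΩP]
  _ = P * (Ω * M * Ω) * P := by simp only [mul_assoc]
  _ = P := hP.2.1

theorem posSemidef_sub_mul_pinv_mul (hΩ : Ω.IsSymm) (hΩΩ : IsIdempotentElem Ω) (hM : M.PosSemidef)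
    (hP : IsMP (Ω * M * Ω) P) : (M - M * P * M).PosSemidef := by
  have hMs : M.IsSymm := isHermitian_iff_isSymm.mp hM.isHermitian
  have hPs := hP.isSymm (hΩ.conj hMs)
  have hPMP := pinv_mul_mul_pinv hΩ hΩΩ hMs hP
  have hF : (1 - P * M)ᴴ * M * (1 - P * M) = M - M * P * M := by
    rw [conjTranspose_eq_transpose_of_trivial, transpose_sub, transpose_one, transpose_mul,
      hMs.eq, hPs.eq]
    have hPMPM : P * (M * (P * M)) = P * M := by rw [← mul_assoc, ← mul_assoc, hPMP]
    simp only [sub_mul, mul_sub, one_mul, mul_one, mul_assoc, hPMPM]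
    abel
  exact hF ▸ hM.conjTranspose_mul_mul_same (1 - P * M)

theorem posSemidef_mul_pinv_mul (hΩ : Ω.IsSymm) (hM : M.PosSemidef)
    (hP : IsMP (Ω * M * Ω) P) : (M * P * M).PosSemidef := by
  have hMs : M.IsSymm := isHermitian_iff_isSymm.mp hM.isHermitian
  have hB : (Ω * M * Ω).PosSemidef := by
    simpa [conjTranspose_eq_transpose_of_trivial, hΩ.eq] using hM.conjTranspose_mul_mul_same Ω
  simpa [conjTranspose_eq_transpose_of_trivial, hMs.eq] using
    (hP.posSemidef hB).conjTranspose_mul_mul_same M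

theorem pinv_mulVec_eq_zero_iff (hΩ : Ω.IsSymm) (hM : M.PosDef) (hP : IsMP (Ω * M * Ω) P)
    {v : Fin m → ℝ} : P *ᵥ v = 0 ↔ Ω *ᵥ v = 0 := by
  have hMs : M.IsSymm := isHermitian_iff_isSymm.mp hM.isHermitian
  rw [hP.mulVec_eq_zero_iff (hΩ.conj hMs)]
  refine ⟨fun hv => ?_, fun hv => by rw [← mulVec_mulVec, hv, mulVec_zero]⟩
  by_contra hne
  have hquad : Ω *ᵥ v ⬝ᵥ M *ᵥ (Ω *ᵥ v) = v ⬝ᵥ (Ω * M * Ω) *ᵥ v := by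
    rw [← mulVec_mulVec, ← mulVec_mulVec, dotProduct_mulVec v Ω, ← mulVec_transpose, hΩ.eq]
  have := hM.dotProduct_mulVec_pos hne
  rw [star_trivial, hquad, hv, dotProduct_zero] at this
  exact this.false

theorem mul_pinv_mul_mulVec_eq_zero_iff (hΩ : Ω.IsSymm) (hM : M.PosDef)
    (hP : IsMP (Ω * M * Ω) P) {x : Fin m → ℝ} :
    (M * P * M) *ᵥ x = 0 ↔ Ω *ᵥ (M *ᵥ x) = 0 := by
  rw [← pinv_mulVec_eq_zero_iff hΩ hM hP, ← mulVec_mulVec, ← mulVec_mulVec,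
    (mulVec_injective_iff_isUnit.mpr hM.isUnit).eq_iff' (mulVec_zero M)]

variable {u : Fin m → ℝ}

theorem vecMul_one_sub_pinv_mul (hΩ : Ω.IsSymm) (hM : M.PosDef) (hP : IsMP (Ω * M * Ω) P)
    (hu : Ω *ᵥ u = 0) : u ᵥ* (1 - P * M) = u := by
  have hPs := hP.isSymm (hΩ.conj (isHermitian_iff_isSymm.mp hM.isHermitian))
  have huP : u ᵥ* P = 0 := by
    rw [← hPs.eq, vecMul_transpose, (pinv_mulVec_eq_zero_iff hΩ hM hP).mpr hu]
  rw [vecMul_sub, vecMul_one, ← vecMul_vecMul, huP, zero_vecMul, sub_zero]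

theorem one_sub_pinv_mul_mulVec_inv_mulVec (hΩ : Ω.IsSymm) (hM : M.PosDef)
    (hP : IsMP (Ω * M * Ω) P) (hu : Ω *ᵥ u = 0) : (1 - P * M) *ᵥ (M⁻¹ *ᵥ u) = M⁻¹ *ᵥ u := by
  rw [sub_mulVec, one_mulVec, ← mulVec_mulVec, mulVec_mulVec _ M,
    mul_nonsing_inv _ ((isUnit_iff_isUnit_det M).mp hM.isUnit), one_mulVec,
    (pinv_mulVec_eq_zero_iff hΩ hM hP).mpr hu, sub_zero]

end CompressedPseudoinverse

section ComplexEigenvalues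

theorem star_dotProduct_map_ofReal_mulVec {n : Type*} [Fintype n] {R : Matrix n n ℝ}
    (hR : R.IsSymm) (v : n → ℂ) :
    star v ⬝ᵥ R.map Complex.ofRealHom *ᵥ v =
      (((fun i => (v i).re) ⬝ᵥ R *ᵥ fun i => (v i).re) +
        ((fun i => (v i).im) ⬝ᵥ R *ᵥ fun i => (v i).im) : ℝ) := by
  set a : n → ℝ := fun i => (v i).re
  set b : n → ℝ := fun i => (v i).im
  have hv : v = Complex.ofRealHom ∘ a + Complex.I • Complex.ofRealHom ∘ b := by
    ext i; simp [a, b, Complex.ext_iff]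
  have hsv : star v = Complex.ofRealHom ∘ a - Complex.I • Complex.ofRealHom ∘ b := by
    ext i; simp [a, b, Complex.ext_iff]
  have hcast : ∀ c d : n → ℝ, Complex.ofRealHom ∘ c ⬝ᵥ R.map Complex.ofRealHom *ᵥ
      (Complex.ofRealHom ∘ d) = (c ⬝ᵥ R *ᵥ d : ℝ) := fun c d => by
    have : R.map Complex.ofRealHom *ᵥ (Complex.ofRealHom ∘ d) = Complex.ofRealHom ∘ (R *ᵥ d) :=
      funext fun i => (RingHom.map_mulVec _ R d i).symm
    rw [this, ← RingHom.map_dotProduct]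
    rfl
  have hba : b ⬝ᵥ R *ᵥ a = a ⬝ᵥ R *ᵥ b := by
    rw [dotProduct_mulVec, ← mulVec_transpose, hR.eq, dotProduct_comm]
  rw [hsv, hv]
  simp only [mulVec_add, mulVec_smul, sub_dotProduct, dotProduct_add, smul_dotProduct,
    dotProduct_smul, hcast, hba, smul_eq_mul]
  push_cast
  ring_nf
  rw [Complex.I_sq]
  ring

variable {m : ℕ}

theorem IsEigenvalue.exists_eq_ofReal_mem_Icc {M A : Matrix (Fin m) (Fin m) ℝ} (hM : M.PosDef)
    (hMA : (M * A).PosSemidef) (hM_MA : (M - M * A).PosSemidef) {lam : ℂ}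
    (h : IsEigenvalue A lam) : ∃ q ∈ Set.Icc (0 : ℝ) 1, lam = q := by
  obtain ⟨v, hv0, hv⟩ := h
  set a : Fin m → ℝ := fun i => (v i).re
  set b : Fin m → ℝ := fun i => (v i).im
  -- `qM = v* M v` and `qMA = v* (M A) v`, by `star_dotProduct_map_ofReal_mulVec`
  set qM : ℝ := a ⬝ᵥ M *ᵥ a + b ⬝ᵥ M *ᵥ b
  set qMA : ℝ := a ⬝ᵥ (M * A) *ᵥ a + b ⬝ᵥ (M * A) *ᵥ b
  have hnonneg : ∀ {R : Matrix (Fin m) (Fin m) ℝ}, R.PosSemidef → ∀ x, 0 ≤ x ⬝ᵥ R *ᵥ x :=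
    fun hR x => by simpa using hR.dotProduct_mulVec_nonneg x
  have hqM : 0 < qM := by
    have hab : a ≠ 0 ∨ b ≠ 0 := by
      by_contra! hab
      exact hv0 (funext fun i => Complex.ext (congrFun hab.1 i) (congrFun hab.2 i))
    rcases hab with hab | hab
    · have := hM.dotProduct_mulVec_pos hab
      rw [star_trivial] at this
      linarith [hnonneg hM.posSemidef b]
    · have := hM.dotProduct_mulVec_pos hab
      rw [star_trivial] at this
      linarith [hnonneg hM.posSemidef a]
  have hqMA : 0 ≤ qMA := add_nonneg (hnonneg hMA a) (hnonneg hMA b)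
  have hle : qMA ≤ qM := by
    have ha := hnonneg hM_MA a
    have hb := hnonneg hM_MA b
    rw [sub_mulVec, dotProduct_sub] at ha hb
    linarith
  have hv' : A.map Complex.ofRealHom *ᵥ v = lam • v := hv
  have heq : (qMA : ℂ) = lam * qM := by
    rw [← star_dotProduct_map_ofReal_mulVec (isHermitian_iff_isSymm.mp hMA.isHermitian),
      ← star_dotProduct_map_ofReal_mulVec (isHermitian_iff_isSymm.mp hM.isHermitian),
      Matrix.map_mul, ← mulVec_mulVec, hv', mulVec_smul, dotProduct_smul, smul_eq_mul]
  refine ⟨qMA / qM, ⟨div_nonneg hqMA hqM.le, (div_le_one hqM).mpr hle⟩, ?_⟩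
  rw [Complex.ofReal_div, heq, mul_div_cancel_right₀ _ (by exact_mod_cast hqM.ne')]

end ComplexEigenvalues

section WeightedAverage

variable {n ι : Type*} [Fintype n] [Fintype ι] {ρ : ι → ℝ}

theorem sum_smul_mulVec_eq_self (hρ : ∑ r, ρ r = 1) {A : ι → Matrix n n ℝ} {x : n → ℝ}
    (hA : ∀ r, A r *ᵥ x = x) : (∑ r, ρ r • A r) *ᵥ x = x := by
  simp only [sum_mulVec, smul_mulVec, hA, ← Finset.sum_smul, hρ, one_smul]

theorem vecMul_sum_smul_eq_self (hρ : ∑ r, ρ r = 1) {A : ι → Matrix n n ℝ} {x : n → ℝ}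
    (hA : ∀ r, x ᵥ* A r = x) : x ᵥ* (∑ r, ρ r • A r) = x := by
  simp only [vecMul_sum, vecMul_smul, hA, ← Finset.sum_smul, hρ, one_smul]

theorem mulVec_eq_zero_of_sum_smul_mulVec_eq_zero (hρ : ∀ r, 0 < ρ r)
    {A : ι → Matrix n n ℝ} (hA : ∀ r, (A r).PosSemidef) {x : n → ℝ}
    (hx : (∑ r, ρ r • A r) *ᵥ x = 0) (r : ι) : A r *ᵥ x = 0 := by
  have hsum : ∑ r, ρ r * (x ⬝ᵥ A r *ᵥ x) = 0 := by
    simpa [sum_mulVec, dotProduct_sum, smul_mulVec, dotProduct_smul] using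
      congrArg (x ⬝ᵥ ·) hx
  have hterm := (Finset.sum_eq_zero_iff_of_nonneg fun s _ =>
    mul_nonneg (hρ s).le (by simpa using (hA s).dotProduct_mulVec_nonneg x)).mp hsum r
    (Finset.mem_univ r)
  rw [← (hA r).dotProduct_mulVec_zero_iff, star_trivial]
  simpa [(hρ r).ne'] using hterm

variable [DecidableEq n] {P : ι → Matrix n n ℝ} (M : Matrix n n ℝ)

theorem mul_sum_smul_one_sub_mul :
    M * ∑ r, ρ r • (1 - P r * M) = ∑ r, ρ r • (M - M * P r * M) := by
  simp only [Finset.mul_sum, mul_smul_comm, mul_sub, mul_one, mul_assoc]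

theorem sub_mul_sum_smul_one_sub_mul (hρ : ∑ r, ρ r = 1) :
    M - M * ∑ r, ρ r • (1 - P r * M) = ∑ r, ρ r • (M * P r * M) := by
  rw [mul_sum_smul_one_sub_mul, sub_eq_iff_eq_add, ← Finset.sum_add_distrib]
  simp only [← smul_add, add_sub_cancel, ← Finset.sum_smul, hρ, one_smul]

end WeightedAverage

theorem exists_eq_smul_one_of_forall_sum_eq_zero {n : Type*} [Fintype n]
    {z : n → ℝ} (h : ∀ y : n → ℝ, ∑ i, y i = 0 → z ⬝ᵥ y = 0) : ∃ c : ℝ, z = c • fun _ => 1 := by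
  classical
  rcases isEmpty_or_nonempty n with hn | ⟨⟨i₀⟩⟩
  · exact ⟨0, Subsingleton.elim _ _⟩
  · refine ⟨z i₀, funext fun j => ?_⟩
    have := h (Pi.single j 1 - Pi.single i₀ 1) (by simp)
    rw [dotProduct_sub, dotProduct_single, dotProduct_single, mul_one, mul_one, sub_eq_zero] at this
    simpa using this

theorem exists_eq_smul_one_of_forall_mulVec_eq_zero {n ι : Type*} [Fintype n]
    {Ω : ι → Matrix n n ℝ} (hΩ : ∀ r, (Ω r).IsSymm)
    (hspan : (⨆ r, LinearMap.range (Ω r).mulVecLin) =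
      LinearMap.ker (∑ i : n, (LinearMap.proj i : (n → ℝ) →ₗ[ℝ] ℝ)))
    {z : n → ℝ} (hz : ∀ r, Ω r *ᵥ z = 0) : ∃ c : ℝ, z = c • fun _ => 1 := by
  refine exists_eq_smul_one_of_forall_sum_eq_zero fun y hy => ?_
  have hy : y ∈ ⨆ r, LinearMap.range (Ω r).mulVecLin := by
    rw [hspan, LinearMap.mem_ker]
    simpa [LinearMap.sum_apply] using hy
  refine Submodule.iSup_induction (motive := fun y => z ⬝ᵥ y = 0) _ hy ?_ (dotProduct_zero z) ?_
  · rintro r _ ⟨w, rfl⟩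
    rw [mulVecLin_apply, dotProduct_mulVec, ← mulVec_transpose, (hΩ r).eq, hz r, zero_dotProduct]
  · intro y₁ y₂ h₁ h₂
    rw [dotProduct_add, h₁, h₂, add_zero]

theorem IsEigenvalue.exists_eq_ofReal_mem_Icc_of_sum_smul_one_sub_pinv_mul {m : ℕ} {ι : Type*}
    [Fintype ι] {Ω P : ι → Matrix (Fin m) (Fin m) ℝ} {M : Matrix (Fin m) (Fin m) ℝ}
    {ρ : ι → ℝ} (hΩ : ∀ r, (Ω r).IsSymm) (hΩΩ : ∀ r, IsIdempotentElem (Ω r)) (hM : M.PosDef)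
    (hP : ∀ r, IsMP (Ω r * M * Ω r) (P r)) (hρ : ∀ r, 0 ≤ ρ r) (hρsum : ∑ r, ρ r = 1)
    {lam : ℂ} (h : IsEigenvalue (∑ r, ρ r • (1 - P r * M)) lam) :
    ∃ q ∈ Set.Icc (0 : ℝ) 1, lam = q := by
  refine h.exists_eq_ofReal_mem_Icc hM ?_ ?_
  · rw [mul_sum_smul_one_sub_mul]
    exact posSemidef_sum _ fun r _ =>
      (posSemidef_sub_mul_pinv_mul (hΩ r) (hΩΩ r) hM.posSemidef (hP r)).smul (hρ r)
  · rw [sub_mul_sum_smul_one_sub_mul M hρsum]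
    exact posSemidef_sum _ fun r _ =>
      (posSemidef_mul_pinv_mul (hΩ r) hM.posSemidef (hP r)).smul (hρ r)

theorem mulVec_mulVec_eq_zero_of_sum_smul_one_sub_pinv_mul_mulVec_eq_self {m : ℕ} {ι : Type*}
    [Fintype ι] {Ω P : ι → Matrix (Fin m) (Fin m) ℝ} {M : Matrix (Fin m) (Fin m) ℝ}
    {ρ : ι → ℝ} (hΩ : ∀ r, (Ω r).IsSymm) (hM : M.PosDef) (hP : ∀ r, IsMP (Ω r * M * Ω r) (P r))
    (hρ : ∀ r, 0 < ρ r) (hρsum : ∑ r, ρ r = 1) {x : Fin m → ℝ}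
    (hx : (∑ r, ρ r • (1 - P r * M)) *ᵥ x = x) (r : ι) : Ω r *ᵥ (M *ᵥ x) = 0 := by
  have hx' : (∑ r, ρ r • (M * P r * M)) *ᵥ x = 0 := by
    rw [← sub_mul_sum_smul_one_sub_mul M hρsum, sub_mulVec, ← mulVec_mulVec, hx, sub_self]
  exact (mul_pinv_mul_mulVec_eq_zero_iff (hΩ r) hM (hP r)).mp
    (mulVec_eq_zero_of_sum_smul_mulVec_eq_zero hρ
      (fun r => posSemidef_mul_pinv_mul (hΩ r) hM.posSemidef (hP r)) hx' r)

theorem Fave_eigenvalues_general (m ℓ : ℕ)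
    (C : Fin ℓ → Finset (Fin m))
    (M : Matrix (Fin m) (Fin m) ℝ) (hM : M.PosDef)
    (P : Fin ℓ → Matrix (Fin m) (Fin m) ℝ)
    (hP : ∀ r, IsMP (Omega (C r) * M * Omega (C r)) (P r))
    (F : Fin ℓ → Matrix (Fin m) (Fin m) ℝ) (hF : ∀ r, F r = 1 - P r * M)
    (ρ : Fin ℓ → ℝ) (hρ : ∀ r, 0 < ρ r) (hρsum : ∑ r, ρ r = 1)
    (Fave : Matrix (Fin m) (Fin m) ℝ) (hFave : Fave = ∑ r, ρ r • F r) :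
    -- (a)
    (∀ lam : ℂ, IsEigenvalue Fave lam → lam.im = 0 ∧ ‖lam‖ ≤ 1) ∧
    -- (b)
    (Matrix.vecMul (fun _ => (1 : ℝ)) Fave = fun _ => (1 : ℝ)) ∧
    -- (c)
    ((⨆ r, LinearMap.range (Omega (C r)).mulVecLin)
        = LinearMap.ker (∑ i : Fin m, (LinearMap.proj i : (Fin m → ℝ) →ₗ[ℝ] ℝ)) →
      (∀ x : Fin m → ℝ, Fave.mulVec x = x ↔ ∃ c : ℝ, x = c • M⁻¹.mulVec fun _ => 1) ∧
      (∀ lam : ℂ, IsEigenvalue Fave lam → lam ≠ 1 → ‖lam‖ < 1)) := by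
  have hΩ : ∀ r, (Omega (C r)).IsSymm := fun r => Omega.isSymm _
  obtain rfl : Fave = ∑ r, ρ r • (1 - P r * M) := by simp only [hFave, hF]
  have hspec : ∀ lam, IsEigenvalue (∑ r, ρ r • (1 - P r * M)) lam →
      ∃ q ∈ Set.Icc (0 : ℝ) 1, lam = q := fun lam h =>
    h.exists_eq_ofReal_mem_Icc_of_sum_smul_one_sub_pinv_mul hΩ (fun r => Omega.isIdempotentElem _)
      hM hP (fun r => (hρ r).le) hρsum
  refine ⟨fun lam h => ?_, vecMul_sum_smul_eq_self hρsum fun r =>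
      vecMul_one_sub_pinv_mul (hΩ r) hM (hP r) (Omega.mulVec_one _),
    fun hspan => ⟨fun x => ⟨fun hx => ?_, ?_⟩, fun lam h hne => ?_⟩⟩
  · obtain ⟨q, ⟨hq0, hq1⟩, rfl⟩ := hspec lam h
    exact ⟨Complex.ofReal_im q, by rwa [Complex.norm_of_nonneg hq0]⟩
  · obtain ⟨c, hc⟩ := exists_eq_smul_one_of_forall_mulVec_eq_zero hΩ hspan
      (mulVec_mulVec_eq_zero_of_sum_smul_one_sub_pinv_mul_mulVec_eq_self hΩ hM hP hρ hρsum hx)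
    refine ⟨c, ?_⟩
    rw [← mulVec_smul, ← hc, mulVec_mulVec,
      nonsing_inv_mul _ ((isUnit_iff_isUnit_det M).mp hM.isUnit), one_mulVec]
  · rintro ⟨c, rfl⟩
    rw [mulVec_smul, sum_smul_mulVec_eq_self hρsum fun r =>
      one_sub_pinv_mul_mulVec_inv_mulVec (hΩ r) hM (hP r) (Omega.mulVec_one _)]
  · obtain ⟨q, ⟨hq0, hq1⟩, rfl⟩ := hspec lam h
    rw [Complex.norm_of_nonneg hq0]
    exact hq1.lt_of_ne (by rintro rfl; exact hne Complex.ofReal_one)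

/-- All eigenvalues of `F_ave = Σ_r ρ_r F_r` are real, of absolute value at
most 1; `1ᵀ F_ave = 1ᵀ`; and if the column spaces of the `Ω_r` sum to `ker 1ᵀ`, then the
eigenspace for the eigenvalue 1 is the span of `M⁻¹ 1` and every other eigenvalue has absolute
value strictly less than 1. -/
theorem Fave_eigenvalues (m ℓ : ℕ) (hm : 1 ≤ m) (hℓ : 1 ≤ ℓ)
    (C : Fin ℓ → Finset (Fin m)) (hC : ∀ r, (C r).Nonempty)
    (M : Matrix (Fin m) (Fin m) ℝ) (hM : M.PosDef)
    (P : Fin ℓ → Matrix (Fin m) (Fin m) ℝ)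
    (hP : ∀ r, IsMP (Omega (C r) * M * Omega (C r)) (P r))
    (F : Fin ℓ → Matrix (Fin m) (Fin m) ℝ) (hF : ∀ r, F r = 1 - P r * M)
    (ρ : Fin ℓ → ℝ) (hρ : ∀ r, 0 < ρ r) (hρsum : ∑ r, ρ r = 1)
    (Fave : Matrix (Fin m) (Fin m) ℝ) (hFave : Fave = ∑ r, ρ r • F r) :
    -- (a)
    (∀ lam : ℂ, IsEigenvalue Fave lam → lam.im = 0 ∧ ‖lam‖ ≤ 1) ∧
    -- (b)
    (Matrix.vecMul (fun _ => (1 : ℝ)) Fave = fun _ => (1 : ℝ)) ∧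
    -- (c)
    ((⨆ r, LinearMap.range (Omega (C r)).mulVecLin)
        = LinearMap.ker (∑ i : Fin m, (LinearMap.proj i : (Fin m → ℝ) →ₗ[ℝ] ℝ)) →
      (∀ x : Fin m → ℝ, Fave.mulVec x = x ↔ ∃ c : ℝ, x = c • M⁻¹.mulVec fun _ => 1) ∧
      (∀ lam : ℂ, IsEigenvalue Fave lam → lam ≠ 1 → ‖lam‖ < 1)) :=
  Fave_eigenvalues_general m ℓ C M hM P hP F hF ρ hρ hρsum Fave hFave
end

section
/- Fix integers m ≥ 1 and ℓ ≥ 1 and nonempty subsets (clusters) C_1, …, C_ℓ of {1,…,m}; for each r let Ω_r := diag(1_{C_r}) − (1/|C_r|) 1_{C_r} 1_{C_r}^T ∈ ℝ^{m×m}, and let Ω := I − (1/m) 1 1^T. Let M ∈ ℝ^{m×m} be symmetric positive definite, P_r the Moore–Penrose pseudoinverse of Ω_r M Ω_r, F_r := I − P_r M, let ρ_1, …, ρ_ℓ be positive reals with Σ_r ρ_r = 1, and define L(Δ) := Σ_r ρ_r F_r^T Δ F_r. Then for every Δ ∈ ℝ^{m×m} and every integer k ≥ 0, Ω L^k(Ω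 Δ Ω) Ω = Ω L^k(Δ) Ω. -/
open Matrix

noncomputable def OmDef (m : ℕ) : Matrix (Fin m) (Fin m) ℝ :=
  1 - ((m : ℝ))⁻¹ • Matrix.vecMulVec (fun _ => 1) (fun _ => 1)

lemma Omega_transpose {m : ℕ} (C : Finset (Fin m)) : (Omega C)ᵀ = Omega C := by
  unfold Omega
  rw [Matrix.transpose_sub, Matrix.diagonal_transpose, Matrix.transpose_smul]
  congr 1
  ext i j
  simp [Matrix.vecMulVec_apply, mul_comm]

lemma Omega_colsum {m : ℕ} (C : Finset (Fin m)) (hC : C.Nonempty) (j : Fin m) :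
    ∑ i, Omega C i j = 0 := by
  unfold Omega
  simp [Matrix.vecMulVec_apply, Matrix.diagonal_apply, Finset.sum_sub_distrib,
    Finset.sum_ite_eq, ← Finset.sum_mul, Finset.sum_boole]
  split_ifs <;>
    simp [mul_inv_cancel₀ (Nat.cast_ne_zero.mpr (Finset.card_ne_zero.mpr hC) : (C.card:ℝ) ≠ 0)]

lemma OmDef_transpose (m : ℕ) : (OmDef m)ᵀ = OmDef m := by
  ext i j
  simp [OmDef, Matrix.vecMulVec_apply, Matrix.one_apply, eq_comm]

lemma OmDef_mul_Omega {m : ℕ} (C : Finset (Fin m)) (hC : C.Nonempty) :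
    OmDef m * Omega C = Omega C := by
  unfold OmDef
  rw [Matrix.sub_mul, Matrix.one_mul, Matrix.smul_mul]
  have h : (Matrix.vecMulVec (fun _ => (1:ℝ)) (fun _ => 1) : Matrix (Fin m) (Fin m) ℝ) *
      Omega C = 0 := by
    ext i j
    simp [Matrix.mul_apply, Matrix.vecMulVec_apply, Omega_colsum C hC j]
  rw [h, smul_zero, sub_zero]

lemma Omega_mul_OmDef {m : ℕ} (C : Finset (Fin m)) (hC : C.Nonempty) :
    Omega C * OmDef m = Omega C := by
  have := congrArg Matrix.transpose (OmDef_mul_Omega C hC)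
  simpa [Matrix.transpose_mul, Omega_transpose, OmDef_transpose] using this

lemma OmDef_idem {m : ℕ} (hm : 1 ≤ m) : OmDef m * OmDef m = OmDef m := by
  have hJJ : (Matrix.vecMulVec (fun _ => (1:ℝ)) (fun _ => 1) : Matrix (Fin m) (Fin m) ℝ) *
      Matrix.vecMulVec (fun _ => 1) (fun _ => 1) =
      (m : ℝ) • Matrix.vecMulVec (fun _ => 1) (fun _ => 1) := by
    ext i j
    simp [Matrix.mul_apply, Matrix.vecMulVec_apply]
  have hm0 : (m : ℝ) ≠ 0 := Nat.cast_ne_zero.mpr (by omega)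
  unfold OmDef
  rw [Matrix.sub_mul, Matrix.one_mul, Matrix.mul_sub, Matrix.mul_one, Matrix.smul_mul,
    Matrix.mul_smul, hJJ, smul_smul, smul_smul,
    show ((m:ℝ))⁻¹ * ((m:ℝ))⁻¹ * (m:ℝ) = ((m:ℝ))⁻¹ by field_simp]
  abel

/-- `Ω L^k(Ω Δ Ω) Ω = Ω L^k(Δ) Ω` for every matrix `Δ` and every `k ≥ 0`. -/
theorem Lmap_removing_omegas (m ℓ : ℕ) (hm : 1 ≤ m) (hℓ : 1 ≤ ℓ)
    (C : Fin ℓ → Finset (Fin m)) (hC : ∀ r, (C r).Nonempty)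
    (M : Matrix (Fin m) (Fin m) ℝ) (hM : M.PosDef)
    (P : Fin ℓ → Matrix (Fin m) (Fin m) ℝ)
    (hP : ∀ r, IsMP (Omega (C r) * M * Omega (C r)) (P r))
    (F : Fin ℓ → Matrix (Fin m) (Fin m) ℝ) (hF : ∀ r, F r = 1 - P r * M)
    (ρ : Fin ℓ → ℝ) (hρ : ∀ r, 0 < ρ r) (hρsum : ∑ r, ρ r = 1)
    (Lmap : Matrix (Fin m) (Fin m) ℝ → Matrix (Fin m) (Fin m) ℝ)
    (hLmap : ∀ Δ, Lmap Δ = ∑ r, ρ r • ((F r)ᵀ * Δ * F r))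
    (Om : Matrix (Fin m) (Fin m) ℝ)
    (hOm : Om = 1 - ((m : ℝ))⁻¹ • Matrix.vecMulVec (fun _ => 1) (fun _ => 1)) :
    ∀ (Δ : Matrix (Fin m) (Fin m) ℝ) (k : ℕ),
      Om * Lmap^[k] (Om * Δ * Om) * Om = Om * Lmap^[k] Δ * Om := by
  have hOm' : Om = OmDef m := hOm
  have hOmOm : Om * Om = Om := by rw [hOm']; exact OmDef_idem hm
  have hOmT : Omᵀ = Om := by rw [hOm']; exact OmDef_transpose m
  have hOmΩ : ∀ r, Om * Omega (C r) = Omega (C r) := fun r => by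
    rw [hOm']; exact OmDef_mul_Omega _ (hC r)
  have hΩOm : ∀ r, Omega (C r) * Om = Omega (C r) := fun r => by
    rw [hOm']; exact Omega_mul_OmDef _ (hC r)
  have hMT : Mᵀ = M := hM.isHermitian.eq
  have hBsym : ∀ r, (Omega (C r) * M * Omega (C r))ᵀ = Omega (C r) * M * Omega (C r) :=
    fun r => by
      simp only [Matrix.transpose_mul, hMT, Omega_transpose, Matrix.mul_assoc]
  have hOmP : ∀ r, Om * P r = P r := fun r => by
    have h1 : P r * (Omega (C r) * M * Omega (C r)) =
        Omega (C r) * M * Omega (C r) * (P r)ᵀ := by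
      rw [← (hP r).2.2.2, Matrix.transpose_mul, hBsym r]
    have h2 : P r = Omega (C r) * M * Omega (C r) * (P r)ᵀ * P r := by
      conv_lhs => rw [← (hP r).2.1, h1]
    calc Om * P r = Om * (Omega (C r) * M * Omega (C r) * (P r)ᵀ * P r) := by rw [← h2]
      _ = (Om * Omega (C r)) * (M * (Omega (C r) * ((P r)ᵀ * P r))) := by
          simp only [Matrix.mul_assoc]
      _ = Omega (C r) * (M * (Omega (C r) * ((P r)ᵀ * P r))) := by rw [hOmΩ r]
      _ = Omega (C r) * M * Omega (C r) * (P r)ᵀ * P r := by simp only [Matrix.mul_assoc]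
      _ = P r := h2.symm
  have hPOm : ∀ r, P r * Om = P r := fun r => by
    have h1 : Omega (C r) * M * Omega (C r) * P r =
        (P r)ᵀ * (Omega (C r) * M * Omega (C r)) := by
      rw [← (hP r).2.2.1, Matrix.transpose_mul, hBsym r]
    have h2 : P r = P r * ((P r)ᵀ * (Omega (C r) * M * Omega (C r))) := by
      conv_lhs => rw [← (hP r).2.1, Matrix.mul_assoc, h1]
    calc P r * Om = P r * ((P r)ᵀ * (Omega (C r) * M * Omega (C r))) * Om := by rw [← h2]
      _ = P r * ((P r)ᵀ * (Omega (C r) * (M * (Omega (C r) * Om)))) := by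
          simp only [Matrix.mul_assoc]
      _ = P r * ((P r)ᵀ * (Omega (C r) * (M * Omega (C r)))) := by rw [hΩOm r]
      _ = P r * ((P r)ᵀ * (Omega (C r) * M * Omega (C r))) := by
          simp only [Matrix.mul_assoc]
      _ = P r := h2.symm
  have hFOm : ∀ r, Om * F r * Om = F r * Om := fun r => by
    rw [hF r]
    calc Om * (1 - P r * M) * Om = Om * Om - (Om * P r) * (M * Om) := by noncomm_ring
      _ = Om - P r * (M * Om) := by rw [hOmOm, hOmP r]
      _ = (1 - P r * M) * Om := by noncomm_ring
  have hFtOm : ∀ r, Om * (F r)ᵀ * Om = Om * (F r)ᵀ := fun r => by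
    have := congrArg Matrix.transpose (hFOm r)
    simpa [Matrix.transpose_mul, hOmT, Matrix.mul_assoc] using this
  have key : ∀ Δ, Om * Lmap (Om * Δ * Om) * Om = Om * Lmap Δ * Om := by
    intro Δ
    rw [hLmap, hLmap, Finset.mul_sum, Finset.mul_sum, Finset.sum_mul, Finset.sum_mul]
    refine Finset.sum_congr rfl fun r _ => ?_
    rw [Matrix.mul_smul, Matrix.smul_mul, Matrix.mul_smul, Matrix.smul_mul]
    congr 1
    calc Om * ((F r)ᵀ * (Om * Δ * Om) * F r) * Om
        = (Om * (F r)ᵀ * Om) * Δ * (Om * F r * Om) := by simp only [Matrix.mul_assoc]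
      _ = (Om * (F r)ᵀ) * Δ * (F r * Om) := by rw [hFtOm r, hFOm r]
      _ = Om * ((F r)ᵀ * Δ * F r) * Om := by simp only [Matrix.mul_assoc]
  intro Δ k
  induction k generalizing Δ with
  | zero =>
    simp only [Function.iterate_zero, id_eq]
    calc Om * (Om * Δ * Om) * Om = (Om * Om) * Δ * (Om * Om) := by
          simp only [Matrix.mul_assoc]
      _ = Om * Δ * Om := by rw [hOmOm]
  | succ k ih =>
    rw [Function.iterate_succ_apply, Function.iterate_succ_apply]
    calc Om * Lmap^[k] (Lmap (Om * Δ * Om)) * Om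
        = Om * Lmap^[k] (Om * Lmap (Om * Δ * Om) * Om) * Om := (ih _).symm
      _ = Om * Lmap^[k] (Om * Lmap Δ * Om) * Om := by rw [key]
      _ = Om * Lmap^[k] (Lmap Δ) * Om := ih _
end
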